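/- arXiv:2509.19784 — 2 statements merged into one kernel-verified Lean document; each statement's English description precedes it below -/
import Mathlib

section
/- If v₁, v₂ is an orthonormal eigenbasis of the covariance matrix C with eigenvalues λ₁, λ₂, then under the control law ṗᵢ = -(e₁η₁ⁱv₁ + e₂η₂ⁱv₂) with invariant centroid, the matrix derivative satisfies Ċ v₁ = -2e₁λ₁ v₁; in particular v₁ remains an eigenvector of C along the flow. -/
open Matrix

/-! The control law is the linear flow `żᵢ = -A zᵢ` with `A = e₁ v₁v₁ᵀ + e₂ v₂v₂ᵀ`, so the
covariance obeys the Lyapunov equation `Ċ = -(A C + C Aᵀ)`. Orthonormality makes `v₁` an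
eigenvector of the symmetric matrix `A` with eigenvalue `e₁`, and it is one of `C` with
eigenvalue `λ₁`; hence `Ċ v₁ = -(e₁λ₁ + λ₁e₁) v₁`. -/

section LinearFlow

variable {ι n R : Type*} [Fintype ι] [Fintype n] [CommRing R]

theorem vecMulVec_neg_mulVec_add_vecMulVec (A : Matrix n n R) (x : n → R) :
    vecMulVec (-(A *ᵥ x)) x + vecMulVec x (-(A *ᵥ x)) =
      -(A * vecMulVec x x + vecMulVec x x * Aᵀ) := by
  rw [mul_vecMulVec, vecMulVec_mul, vecMul_transpose, neg_vecMulVec, vecMulVec_neg, neg_add]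

theorem smul_sum_vecMulVec_of_linear_flow (A : Matrix n n R) (c : R) (z zdot : ι → n → R)
    (hzdot : ∀ i, zdot i = -(A *ᵥ z i)) :
    c • ∑ i, (vecMulVec (zdot i) (z i) + vecMulVec (z i) (zdot i)) =
      -(A * (c • ∑ i, vecMulVec (z i) (z i)) + (c • ∑ i, vecMulVec (z i) (z i)) * Aᵀ) := by
  simp only [hzdot, vecMulVec_neg_mulVec_add_vecMulVec, Finset.sum_neg_distrib,
    Finset.sum_add_distrib, Matrix.mul_smul, Matrix.smul_mul, Matrix.mul_sum, Matrix.sum_mul,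
    smul_neg, smul_add]

end LinearFlow

section RankTwoGain

variable {n R : Type*} [CommRing R]

theorem transpose_add_smul_vecMulVec_self (e₁ e₂ : R) (v₁ v₂ : n → R) :
    (e₁ • vecMulVec v₁ v₁ + e₂ • vecMulVec v₂ v₂)ᵀ =
      e₁ • vecMulVec v₁ v₁ + e₂ • vecMulVec v₂ v₂ := by
  simp only [transpose_add, transpose_smul, transpose_vecMulVec]

variable [Fintype n]

theorem add_smul_vecMulVec_self_mulVec (e₁ e₂ : R) (v₁ v₂ x : n → R) :
    (e₁ • vecMulVec v₁ v₁ + e₂ • vecMulVec v₂ v₂) *ᵥ x =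
      (e₁ * (x ⬝ᵥ v₁)) • v₁ + (e₂ * (x ⬝ᵥ v₂)) • v₂ := by
  simp only [add_mulVec, smul_mulVec, vecMulVec_mulVec, op_smul_eq_smul, smul_smul,
    dotProduct_comm x]

theorem add_smul_vecMulVec_self_mulVec_of_orthonormal (e₁ e₂ : R) {v₁ v₂ : n → R}
    (hv₁ : v₁ ⬝ᵥ v₁ = 1) (hv₁₂ : v₁ ⬝ᵥ v₂ = 0) :
    (e₁ • vecMulVec v₁ v₁ + e₂ • vecMulVec v₂ v₂) *ᵥ v₁ = e₁ • v₁ := by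
  rw [add_smul_vecMulVec_self_mulVec, hv₁, hv₁₂, mul_one, mul_zero, zero_smul, add_zero]

end RankTwoGain

theorem covariance_derivative_eigenvector_general (N : ℕ)
    (z : Fin N → (Fin 2 → ℝ))
    (C : Matrix (Fin 2) (Fin 2) ℝ)
    (hC : C = (N : ℝ)⁻¹ • ∑ i, Matrix.vecMulVec (z i) (z i))
    (v1 v2 : Fin 2 → ℝ) (hv1 : v1 ⬝ᵥ v1 = 1) (hv12 : v1 ⬝ᵥ v2 = 0)
    (lam1 e1 e2 : ℝ)
    (heig1 : C *ᵥ v1 = lam1 • v1)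
    (pdot : Fin N → (Fin 2 → ℝ))
    (hpdot : ∀ i, pdot i = -((e1 * (z i ⬝ᵥ v1)) • v1 + (e2 * (z i ⬝ᵥ v2)) • v2))
    (Cdot : Matrix (Fin 2) (Fin 2) ℝ)
    (hCdot : Cdot = (N : ℝ)⁻¹ •
      ∑ i, (Matrix.vecMulVec (pdot i) (z i) + Matrix.vecMulVec (z i) (pdot i))) :
    Cdot *ᵥ v1 = (-2 * e1 * lam1) • v1 := by
  set A := e1 • vecMulVec v1 v1 + e2 • vecMulVec v2 v2
  have hflow : ∀ i, pdot i = -(A *ᵥ z i) := fun i => by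
    rw [hpdot, add_smul_vecMulVec_self_mulVec]
  have hlyap : Cdot = -(A * C + C * Aᵀ) := by
    rw [hCdot, hC, smul_sum_vecMulVec_of_linear_flow A _ z pdot hflow]
  have hA : A *ᵥ v1 = e1 • v1 := add_smul_vecMulVec_self_mulVec_of_orthonormal e1 e2 hv1 hv12
  rw [hlyap, neg_mulVec, add_mulVec, ← mulVec_mulVec, ← mulVec_mulVec,
    transpose_add_smul_vecMulVec_self, hA, heig1, mulVec_smul, mulVec_smul, hA, heig1,
    smul_smul, smul_smul, ← add_smul, ← neg_smul]
  ring_nf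

/-- If `v₁, v₂` is an orthonormal eigenbasis of the covariance matrix `C` with eigenvalues
`λ₁, λ₂`, then under `ṗᵢ = -(e₁η₁ⁱv₁ + e₂η₂ⁱv₂)` with invariant centroid,
`Ċ v₁ = -2e₁λ₁ v₁`, where `Ċ = (1/N) Σᵢ (ṗᵢ zᵢᵀ + zᵢ ṗᵢᵀ)`. -/
theorem covariance_derivative_eigenvector (N : ℕ) (hN : 0 < N)
    (p : Fin N → (Fin 2 → ℝ)) (pc : Fin 2 → ℝ) (hpc : pc = (N : ℝ)⁻¹ • ∑ i, p i)
    (z : Fin N → (Fin 2 → ℝ)) (hz : ∀ i, z i = p i - pc)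
    (C : Matrix (Fin 2) (Fin 2) ℝ)
    (hC : C = (N : ℝ)⁻¹ • ∑ i, Matrix.vecMulVec (z i) (z i))
    (v1 v2 : Fin 2 → ℝ) (hv1 : v1 ⬝ᵥ v1 = 1) (hv2 : v2 ⬝ᵥ v2 = 1) (hv12 : v1 ⬝ᵥ v2 = 0)
    (lam1 lam2 e1 e2 : ℝ)
    (heig1 : C *ᵥ v1 = lam1 • v1) (heig2 : C *ᵥ v2 = lam2 • v2)
    (pdot : Fin N → (Fin 2 → ℝ))
    (hpdot : ∀ i, pdot i = -((e1 * (z i ⬝ᵥ v1)) • v1 + (e2 * (z i ⬝ᵥ v2)) • v2))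
    (Cdot : Matrix (Fin 2) (Fin 2) ℝ)
    (hCdot : Cdot = (N : ℝ)⁻¹ •
      ∑ i, (Matrix.vecMulVec (pdot i) (z i) + Matrix.vecMulVec (z i) (pdot i))) :
    Cdot *ᵥ v1 = (-2 * e1 * lam1) • v1 :=
  covariance_derivative_eigenvector_general N z C hC v1 v2 hv1 hv12 lam1 e1 e2 heig1 pdot hpdot Cdot
    hCdot
end

section
/- Consider the consensus estimator x̂̇ = -L x̂ + L x on ℝᴺ, where L = BBᵀ is the Laplacian of a connected undirected graph and x ∈ ℝᴺ is constant. If 1ᵀ x̂(0) = 0, then x̂(t) converges exponentially to x - (1ᵀx/N)1, i.e., to the vector of deviations of x from its average. -/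
/-!
The deviation `z = x̂ - x̄` from the claimed limit `x̄` solves `ż = -L z`, and `1ᵀz` is conserved
because `1ᵀL = (L1)ᵀ = 0`; so `z(t)` stays in the hyperplane `1ᵀz = 0`. On that hyperplane
`⟪z, Lz⟫ = ‖Bᵀz‖² ≥ μ‖z‖²` for some `μ > 0`: connectivity makes `Bᵀ` injective there, and an
injective linear map of a finite-dimensional space is antilipschitz. Hence `‖z‖²` satisfies
`d/dt ‖z‖² ≤ -2μ‖z‖²`, and Grönwall's inequality gives `‖z(t)‖ ≤ ‖z(0)‖ e^{-μt}`.
-/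

open Matrix Real

open scoped InnerProductSpace

theorem sum_mulVec_eq_zero_of_isSymm {n R : Type*} [Fintype n] [CommSemiring R]
    {L : Matrix n n R} (hsymm : L.IsSymm) (hL1 : L *ᵥ 1 = 0) (v : n → R) :
    ∑ i, (L *ᵥ v) i = 0 := by
  rw [← one_dotProduct, dotProduct_mulVec, ← hsymm.eq, vecMul_transpose, hL1, zero_dotProduct]

theorem sum_sub_average_smul_one {n K : Type*} [Fintype n] [Field K] [CharZero K] (x : n → K) :
    ∑ i, (x - ((∑ j, x j) / Fintype.card n) • (1 : n → K)) i = 0 := by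
  rcases isEmpty_or_nonempty n with hn | hn
  · simp
  · simp only [Pi.sub_apply, Pi.smul_apply, Pi.one_apply, smul_eq_mul, mul_one,
      Finset.sum_sub_distrib, Finset.sum_const, Finset.card_univ, nsmul_eq_mul]
    rw [mul_div_cancel₀ _ (Nat.cast_ne_zero.2 Fintype.card_ne_zero), sub_self]

theorem const_eq_zero_of_sum_eq_zero {n K : Type*} [Fintype n] [Field K] [CharZero K]
    {y : n → K} {c : K} (hy : y = fun _ => c) (hsum : ∑ i, y i = 0) : y = 0 := by
  subst hy
  rcases isEmpty_or_nonempty n with hn | hn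
  · exact Subsingleton.elim _ _
  · obtain rfl : c = 0 := by simpa using hsum
    rfl

theorem sum_apply_eq_of_hasDerivAt {n F : Type*} [Fintype n] [NormedAddCommGroup F]
    [NormedSpace ℝ F] {y y' : ℝ → n → F} (hy : ∀ t, HasDerivAt y (y' t) t)
    (hy' : ∀ t, ∑ i, y' t i = 0) (s t : ℝ) : ∑ i, y s i = ∑ i, y t i := by
  have hderiv (t : ℝ) : HasDerivAt (fun t => ∑ i, y t i) 0 t :=
    hy' t ▸ HasDerivAt.fun_sum fun i _ => hasDerivAt_pi.1 (hy t) i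
  exact is_const_of_deriv_eq_zero (fun t => (hderiv t).differentiableAt)
    (fun t => (hderiv t).deriv) s t

theorem sum_apply_eq_of_hasDerivAt_neg_mulVec {n : Type*} [Fintype n] {L : Matrix n n ℝ}
    (hsymm : L.IsSymm) (hL1 : L *ᵥ 1 = 0) {y u : ℝ → n → ℝ}
    (hy : ∀ t, HasDerivAt y (-(L *ᵥ u t)) t) (s t : ℝ) : ∑ i, y s i = ∑ i, y t i := by
  refine sum_apply_eq_of_hasDerivAt hy (fun t => ?_) s t
  simp only [Pi.neg_apply, Finset.sum_neg_distrib, sum_mulVec_eq_zero_of_isSymm hsymm hL1,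
    neg_zero]

theorem norm_le_mul_exp_of_inner_deriv_le {E : Type*} [NormedAddCommGroup E]
    [InnerProductSpace ℝ E] {z z' : ℝ → E} {μ : ℝ} (hz : ∀ t, HasDerivAt z (z' t) t)
    (hdiss : ∀ t, ⟪z t, z' t⟫_ℝ ≤ -μ * ‖z t‖ ^ 2) {t : ℝ} (ht : 0 ≤ t) :
    ‖z t‖ ≤ ‖z 0‖ * exp (-μ * t) := by
  have hsq : ‖z t‖ ^ 2 ≤ ‖z 0‖ ^ 2 * exp (-2 * μ * t) := by
    have := le_gronwallBound_of_liminf_deriv_right_le (f := (‖z ·‖ ^ 2)) (K := -2 * μ) (ε := 0)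
      (fun s _ => (hz s).norm_sq.continuousAt.continuousWithinAt)
      (fun s _ _ hr => (hz s).norm_sq.hasDerivWithinAt.liminf_right_slope_le hr) le_rfl
      (fun s _ => by linarith [hdiss s]) t ⟨ht, le_rfl⟩
    rwa [gronwallBound_ε0, sub_zero] at this
  have hexp : exp (-2 * μ * t) = exp (-μ * t) ^ 2 := by rw [← exp_nat_mul]; ring_nf
  rw [hexp, ← mul_pow] at hsq
  exact (pow_le_pow_iff_left₀ (norm_nonneg _) (by positivity) two_ne_zero).1 hsq

theorem inner_toEuclideanLin_mul_transpose_self {n m : Type*} [Fintype n] [DecidableEq n]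
    [Fintype m] [DecidableEq m] (B : Matrix n m ℝ) (x : EuclideanSpace ℝ n) :
    ⟪x, toEuclideanLin (B * Bᵀ) x⟫_ℝ = ‖toEuclideanLin Bᵀ x‖ ^ 2 := by
  have hadj : toEuclideanLin B = (toEuclideanLin Bᵀ).adjoint := by
    rw [← toEuclideanLin_conjTranspose_eq_adjoint, conjTranspose_eq_transpose_of_trivial,
      transpose_transpose]
  rw [toLpLin_mul_same, LinearMap.comp_apply, hadj, LinearMap.adjoint_inner_right,
    real_inner_self_eq_norm_sq]

theorem exists_pos_mul_norm_sq_le_inner_mul_transpose_self {n m : Type*} [Fintype n]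
    [DecidableEq n] [Fintype m] [DecidableEq m] (B : Matrix n m ℝ)
    (hker : ∀ y : n → ℝ, Bᵀ *ᵥ y = 0 → ∃ c : ℝ, y = fun _ => c) :
    ∃ μ > 0, ∀ x : EuclideanSpace ℝ n, ∑ i, x i = 0 →
      μ * ‖x‖ ^ 2 ≤ ⟪x, toEuclideanLin (B * Bᵀ) x⟫_ℝ := by
  let f : EuclideanSpace ℝ n →ₗ[ℝ] EuclideanSpace ℝ m × ℝ :=
    (toEuclideanLin Bᵀ).prod (∑ i, (EuclideanSpace.proj i).toLinearMap)
  have hf : LinearMap.ker f = ⊥ := by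
    refine LinearMap.ker_eq_bot'.2 fun x hx => ?_
    have hB : Bᵀ *ᵥ x.ofLp = 0 := by simpa [f] using congrArg (fun p => p.1.ofLp) hx
    have hsum : ∑ i, x i = 0 := by simpa [f] using congrArg Prod.snd hx
    obtain ⟨c, hc⟩ := hker _ hB
    exact WithLp.ofLp_injective 2 (const_eq_zero_of_sum_eq_zero hc hsum)
  obtain ⟨K, hK, hanti⟩ := f.exists_antilipschitzWith hf
  refine ⟨(K ^ 2 : ℝ)⁻¹, by positivity, fun x hx => ?_⟩
  have hfx : ‖f x‖ = ‖toEuclideanLin Bᵀ x‖ := by simp [f, hx, Prod.norm_def]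
  have hle : ‖x‖ ≤ K * ‖toEuclideanLin Bᵀ x‖ := hfx ▸ hanti.le_mul_norm (map_zero f) x
  rw [inner_toEuclideanLin_mul_transpose_self, inv_mul_le_iff₀ (by positivity), ← mul_pow]
  exact pow_le_pow_left₀ (norm_nonneg x) hle 2

theorem consensus_estimator_convergence_general (N E : ℕ)
    (B : Matrix (Fin N) (Fin E) ℝ) (L : Matrix (Fin N) (Fin N) ℝ)
    (hL : L = B * Bᵀ)
    (hker : ∀ y : Fin N → ℝ, L *ᵥ y = 0 ↔ ∃ c : ℝ, y = fun _ => c)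
    (x : Fin N → ℝ) (xhat : ℝ → (Fin N → ℝ))
    (hode : ∀ t : ℝ, HasDerivAt xhat (-(L *ᵥ (xhat t - x))) t)
    (hinit : ∑ i, xhat 0 i = 0) :
    ∃ K c : ℝ, 0 < K ∧ 0 < c ∧ ∀ t : ℝ, 0 ≤ t →
      ‖xhat t - (x - ((∑ i, x i) / N) • (fun _ => (1 : ℝ)))‖ ≤ K * exp (-c * t) := by
  set xbar := x - ((∑ i, x i) / N) • (fun _ => (1 : ℝ))
  have hL1 : L *ᵥ 1 = 0 := (hker 1).2 ⟨1, rfl⟩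
  have hLxbar (v : Fin N → ℝ) : L *ᵥ (v - xbar) = L *ᵥ (v - x) := by
    rw [sub_sub_eq_add_sub, mulVec_sub, mulVec_add, mulVec_smul, ← Pi.one_def, hL1, smul_zero,
      add_zero, mulVec_sub]
  have hsymm : L.IsSymm := by rw [hL, IsSymm, transpose_mul, transpose_transpose]
  have hz (t : ℝ) : HasDerivAt (xhat · - xbar) (-(L *ᵥ (xhat t - x))) t :=
    (hode t).sub_const xbar
  have hsum (t : ℝ) : ∑ i, (xhat t - xbar) i = 0 := by
    have hxbar := sum_sub_average_smul_one x
    rw [Fintype.card_fin] at hxbar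
    rw [sum_apply_eq_of_hasDerivAt_neg_mulVec hsymm hL1 hz t 0]
    simp only [Pi.sub_apply, Finset.sum_sub_distrib, hinit, zero_sub, neg_eq_zero]
    exact hxbar
  let w (t : ℝ) : EuclideanSpace ℝ (Fin N) := WithLp.toLp 2 (xhat t - xbar)
  have hw (t : ℝ) : HasDerivAt w (-toEuclideanLin L (w t)) t := by
    have := (PiLp.continuousLinearEquiv 2 ℝ _).symm.hasFDerivAt.comp_hasDerivAt t (hz t)
    rwa [← hLxbar] at this
  obtain ⟨μ, hμ, hgap⟩ := exists_pos_mul_norm_sq_le_inner_mul_transpose_self B fun y hy =>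
    (hker y).1 (by rw [hL, ← mulVec_mulVec, hy, mulVec_zero])
  rw [← hL] at hgap
  have hdecay {t : ℝ} (ht : 0 ≤ t) : ‖w t‖ ≤ ‖w 0‖ * exp (-μ * t) :=
    norm_le_mul_exp_of_inner_deriv_le hw (fun s => by
      rw [inner_neg_right]; linarith [hgap (w s) (hsum s)]) ht
  refine ⟨‖w 0‖ + 1, μ, by positivity, hμ, fun t ht => ?_⟩
  calc ‖xhat t - xbar‖ ≤ ‖w t‖ :=
        (pi_norm_le_iff_of_nonneg (norm_nonneg _)).2 fun i => PiLp.norm_apply_le (w t) i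
    _ ≤ ‖w 0‖ * exp (-μ * t) := hdecay ht
    _ ≤ (‖w 0‖ + 1) * exp (-μ * t) := by gcongr; linarith

/-- For the consensus estimator `x̂̇ = -L(x̂ - x)` on `ℝᴺ`, where `L` is the Laplacian of a
connected undirected graph (symmetric PSD with kernel spanned by the all-ones vector) and
`x` is constant: if `1ᵀx̂(0) = 0`, then `x̂(t)` converges exponentially to
`x - (1ᵀx/N)·1`, the vector of deviations of `x` from its average. -/
theorem consensus_estimator_convergence (N E : ℕ) (hN : 0 < N)
    (B : Matrix (Fin N) (Fin E) ℝ) (L : Matrix (Fin N) (Fin N) ℝ)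
    (hL : L = B * Bᵀ)
    (hker : ∀ y : Fin N → ℝ, L *ᵥ y = 0 ↔ ∃ c : ℝ, y = fun _ => c)
    (x : Fin N → ℝ) (xhat : ℝ → (Fin N → ℝ))
    (hode : ∀ t : ℝ, HasDerivAt xhat (-(L *ᵥ (xhat t - x))) t)
    (hinit : ∑ i, xhat 0 i = 0) :
    ∃ K c : ℝ, 0 < K ∧ 0 < c ∧ ∀ t : ℝ, 0 ≤ t →
      ‖xhat t - (x - ((∑ i, x i) / N) • (fun _ => (1 : ℝ)))‖ ≤ K * exp (-c * t) :=
  consensus_estimator_convergence_general N E B L hL hker x xhat hode hinit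
end
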